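/- arXiv:0809.1714 — 6 statements merged into one kernel-verified Lean document; each statement's English description precedes it below -/
import Mathlib

section
/- Let ε and B be bounded self-adjoint operators on a Hilbert space with 0 ≤ B ≤ 1. Then ‖[ε, B]‖ ≤ ‖ε‖. -/
/-! The commutator is unchanged when `B` is replaced by `B - 1/2`, and `0 ≤ B ≤ 1` puts the
spectrum of the self-adjoint operator `B - 1/2` in `[-1/2, 1/2]`, so `‖B - 1/2‖ ≤ 1/2`. Hence
`‖[ε, B]‖ = ‖[ε, B - 1/2]‖ ≤ 2 ‖ε‖ ‖B - 1/2‖ ≤ ‖ε‖`. -/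

open ContinuousLinearMap

section Commutator

variable {𝕜 A : Type*} [NormedField 𝕜] [NormedRing A] [NormedAlgebra 𝕜 A]

lemma commutator_sub_algebraMap (a b : A) (c : 𝕜) :
    a * (b - algebraMap 𝕜 A c) - (b - algebraMap 𝕜 A c) * a = a * b - b * a := by
  rw [mul_sub, sub_mul, Algebra.commutes]
  abel

lemma norm_commutator_le (a b : A) : ‖a * b - b * a‖ ≤ 2 * ‖a‖ * ‖b‖ := by
  calc ‖a * b - b * a‖ ≤ ‖a * b‖ + ‖b * a‖ := norm_sub_le _ _
    _ ≤ ‖a‖ * ‖b‖ + ‖b‖ * ‖a‖ := add_le_add (norm_mul_le _ _) (norm_mul_le _ _)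
    _ = 2 * ‖a‖ * ‖b‖ := by ring

lemma norm_commutator_le_of_sub_algebraMap (a b : A) (c : 𝕜) :
    ‖a * b - b * a‖ ≤ 2 * ‖a‖ * ‖b - algebraMap 𝕜 A c‖ := by
  simpa only [commutator_sub_algebraMap] using norm_commutator_le a (b - algebraMap 𝕜 A c)

end Commutator

section CStarAlgebra

variable {A : Type*} [CStarAlgebra A] [PartialOrder A] [StarOrderedRing A]

lemma IsSelfAdjoint.norm_le_of_neg_algebraMap_le_of_le_algebraMap {a : A} (ha : IsSelfAdjoint a)
    {r : ℝ} (hr : 0 ≤ r) (hlow : -algebraMap ℝ A r ≤ a) (hup : a ≤ algebraMap ℝ A r) :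
    ‖a‖ ≤ r := by
  rcases subsingleton_or_nontrivial A with _ | _
  · simpa [Subsingleton.elim a 0] using hr
  rcases CStarAlgebra.norm_or_neg_norm_mem_spectrum ha with hmem | hmem
  · exact (le_algebraMap_iff_spectrum_le ha).mp hup _ hmem
  · rw [← map_neg] at hlow
    linarith [(algebraMap_le_iff_le_spectrum ha).mp hlow _ hmem]

lemma norm_sub_algebraMap_half_le {b : A} (hb0 : 0 ≤ b) (hb1 : b ≤ 1) :
    ‖b - algebraMap ℝ A (1 / 2)‖ ≤ 1 / 2 := by
  have hsa : IsSelfAdjoint (b - algebraMap ℝ A (1 / 2)) :=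
    (IsSelfAdjoint.of_nonneg hb0).sub (.algebraMap A (.all _))
  have hone : (1 : A) = algebraMap ℝ A (1 / 2) + algebraMap ℝ A (1 / 2) := by
    rw [← map_add]; norm_num
  refine hsa.norm_le_of_neg_algebraMap_le_of_le_algebraMap (by norm_num) ?_ ?_
  · rw [neg_le_sub_iff_le_add, le_add_iff_nonneg_left]
    exact hb0
  · rw [sub_le_iff_le_add, ← hone]
    exact hb1

end CStarAlgebra

theorem commutator_effect_norm_le_general {H : Type*} [NormedAddCommGroup H] [InnerProductSpace ℂ H]
    [CompleteSpace H] (ε B : H →L[ℂ] H)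
    (hB0 : B.IsPositive) (hB1 : (1 - B).IsPositive) :
    ‖ε * B - B * ε‖ ≤ ‖ε‖ := by
  have hB : ‖B - algebraMap ℝ (H →L[ℂ] H) (1 / 2)‖ ≤ 1 / 2 :=
    norm_sub_algebraMap_half_le ((nonneg_iff_isPositive B).mpr hB0) ((le_def B 1).mpr hB1)
  calc ‖ε * B - B * ε‖ ≤ 2 * ‖ε‖ * ‖B - algebraMap ℝ (H →L[ℂ] H) (1 / 2)‖ :=
        norm_commutator_le_of_sub_algebraMap ε B _
    _ ≤ 2 * ‖ε‖ * (1 / 2) := by gcongr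
    _ = ‖ε‖ := by ring

theorem commutator_effect_norm_le {H : Type*} [NormedAddCommGroup H] [InnerProductSpace ℂ H]
    [CompleteSpace H] (ε B : H →L[ℂ] H) (hε : IsSelfAdjoint ε) (hB : IsSelfAdjoint B)
    (hB0 : B.IsPositive) (hB1 : (1 - B).IsPositive) :
    ‖ε * B - B * ε‖ ≤ ‖ε‖ :=
  commutator_effect_norm_le_general ε B hB0 hB1
end

section
/- Let A, B be effect operators (0 ≤ A ≤ 1, 0 ≤ B ≤ 1) on a Hilbert space H, let T be a unital positive map from a commutative von Neumann algebra M to B(H), and let E, F ∈ M be projections. Define error norms α := ‖T(E) - A‖ and β := ‖T(F) - B‖. Then ‖[A, B]‖ ≤ 2αβ + α + β + 2(2α + ‖A - A²‖)^{1/2}(2β + ‖B - B²‖)^{1/2}. -/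
/-!
Write `P = T E`, `Q = T F` and `R = T (E F)`. Since `M` is commutative, `E F`, `E (1 - F)`,
`(1 - E) F`, `(1 - E)(1 - F)` are projections summing to `1`, so their images form a POVM with
marginals `P` and `Q`. For such jointly measurable effects, writing `R - P Q` and `P - P²`,
`Q - Q²` as `∑ aᵢ Rᵢ bᵢ*` over the four POVM elements, the Cauchy–Schwarz inequality of the
Hilbert C⋆-module of four-tuples gives Janssens' bound `‖[P, Q]‖ ≤ 2 √‖P - P²‖ √‖Q - Q²‖`.
The theorem follows by expanding `[A, B]` around `[P, Q]`, using `‖[P, X]‖ ≤ ‖X‖` for an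
effect `P`, and `‖P - P²‖ ≤ 2 ‖P - A‖ + ‖A - A²‖` for effects `P`, `A`.
-/

/-- `R`, `P - R`, `Q - R`, `1 - P - Q + R` are the effects of a four-outcome POVM whose two
marginals are `P` and `Q`. -/
structure IsJointEffect {A : Type*} [Ring A] [LE A] (R P Q : A) : Prop where
  nonneg : 0 ≤ R
  le_left : R ≤ P
  le_right : R ≤ Q
  add_le : P + Q ≤ 1 + R

namespace IsJointEffect

variable {A : Type*} [Ring A] [PartialOrder A] {R P Q : A}

theorem symm (h : IsJointEffect R P Q) : IsJointEffect R Q P :=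
  ⟨h.nonneg, h.le_right, h.le_left, add_comm P Q ▸ h.add_le⟩

theorem nonneg_left (h : IsJointEffect R P Q) : 0 ≤ P :=
  h.nonneg.trans h.le_left

variable [IsOrderedAddMonoid A]

theorem le_one_left (h : IsJointEffect R P Q) : P ≤ 1 := calc
  P ≤ P + (Q - R) := le_add_of_nonneg_right (sub_nonneg.2 h.le_right)
  _ = P + Q - R := (add_sub_assoc P Q R).symm
  _ ≤ 1 + R - R := sub_le_sub_right h.add_le R
  _ = 1 := add_sub_cancel_right 1 R

theorem sub_sub_nonneg (h : IsJointEffect R P Q) : 0 ≤ 1 + R - P - Q := by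
  rw [sub_sub]
  exact sub_nonneg.2 h.add_le

end IsJointEffect

section NormedRing

variable {A : Type*} [NormedRing A]

theorem norm_sub_sq_le_of_norm_le_one {P X : A} (hP : ‖1 - P‖ ≤ 1) (hX : ‖X‖ ≤ 1) :
    ‖P - P ^ 2‖ ≤ 2 * ‖P - X‖ + ‖X - X ^ 2‖ := by
  have hPX : ‖(1 - P) * (P - X)‖ ≤ ‖P - X‖ :=
    (norm_mul_le _ _).trans (mul_le_of_le_one_left (norm_nonneg _) hP)
  have hXP : ‖(P - X) * X‖ ≤ ‖P - X‖ :=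
    (norm_mul_le _ _).trans (mul_le_of_le_one_right (norm_nonneg _) hX)
  calc ‖P - P ^ 2‖ = ‖(X - X ^ 2) + ((1 - P) * (P - X) - (P - X) * X)‖ := by
        congr 1; noncomm_ring
    _ ≤ ‖X - X ^ 2‖ + (‖(1 - P) * (P - X)‖ + ‖(P - X) * X‖) :=
        (norm_add_le _ _).trans (add_le_add le_rfl (norm_sub_le _ _))
    _ ≤ 2 * ‖P - X‖ + ‖X - X ^ 2‖ := by linarith

end NormedRing

section CStarAlgebra

variable {A : Type*} [CStarAlgebra A] [PartialOrder A] [StarOrderedRing A]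

theorem norm_sum_mul_star_le {ι : Type*} [Fintype ι] (x y : ι → A) :
    ‖∑ i, y i * star (x i)‖ ≤ √‖∑ i, x i * star (x i)‖ * √‖∑ i, y i * star (y i)‖ := by
  simpa [WithCStarModule.pi_inner, WithCStarModule.pi_norm, WithCStarModule.inner_def] using
    CStarModule.norm_inner_le (A := A) (E := WithCStarModule A (ι → A))
      (x := (WithCStarModule.equiv A _).symm x) (y := (WithCStarModule.equiv A _).symm y)

theorem norm_sum_mul_mul_star_le {ι : Type*} [Fintype ι] (a b R : ι → A) (hR : ∀ i, 0 ≤ R i) :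
    ‖∑ i, b i * R i * star (a i)‖ ≤
      √‖∑ i, a i * R i * star (a i)‖ * √‖∑ i, b i * R i * star (b i)‖ := by
  have sandwich (c d : ι → A) (i : ι) :
      c i * CFC.sqrt (R i) * star (d i * CFC.sqrt (R i)) = c i * R i * star (d i) := by
    rw [star_mul, (CFC.sqrt_nonneg (R i)).isSelfAdjoint.star_eq, mul_assoc,
      ← mul_assoc _ _ (star _), CFC.sqrt_mul_sqrt_self (R i) (hR i), ← mul_assoc]
  simpa only [sandwich] using
    norm_sum_mul_star_le (fun i ↦ a i * CFC.sqrt (R i)) (fun i ↦ b i * CFC.sqrt (R i))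

variable {P : A}

theorem norm_one_sub_le_one_of_nonneg_of_le_one (h0 : 0 ≤ P) (h1 : P ≤ 1) : ‖1 - P‖ ≤ 1 :=
  (CStarAlgebra.norm_le_one_iff_of_nonneg _ (sub_nonneg.2 h1)).2 (sub_le_self 1 h0)

theorem sub_sq_nonneg_of_nonneg_of_le_one (h0 : 0 ≤ P) (h1 : P ≤ 1) : 0 ≤ P - P ^ 2 := by
  rw [sq, ← mul_one_sub]
  exact Commute.mul_nonneg h0 (sub_nonneg.2 h1) ((Commute.one_right P).sub_right (Commute.refl P))

theorem norm_commutator_le_of_nonneg_of_le_one (h0 : 0 ≤ P) (h1 : P ≤ 1) (X : A) :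
    ‖P * X - X * P‖ ≤ ‖X‖ := by
  set S := P + P - 1
  have hS : IsSelfAdjoint S := (h0.isSelfAdjoint.add h0.isSelfAdjoint).sub (.one A)
  have hSS : S * S ≤ 1 := by
    rw [show S * S = 1 - 4 • (P - P ^ 2) by simp only [S]; noncomm_ring]
    exact sub_le_self 1 (nsmul_nonneg (sub_sq_nonneg_of_nonneg_of_le_one h0 h1) 4)
  have hS1 : ‖S‖ ≤ 1 := by
    have := (CStarAlgebra.norm_le_one_iff_of_nonneg _ hS.mul_self_nonneg).2 hSS
    rw [hS.norm_mul_self] at this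
    exact (sq_le_one_iff₀ (norm_nonneg S)).1 this
  have hcomm : S * X - X * S = (P * X - X * P) + (P * X - X * P) := by simp only [S]; noncomm_ring
  have h2 : ‖(P * X - X * P) + (P * X - X * P)‖ ≤ 2 * ‖X‖ := calc
    _ = ‖S * X - X * S‖ := by rw [hcomm]
    _ ≤ ‖S‖ * ‖X‖ + ‖X‖ * ‖S‖ :=
      (norm_sub_le _ _).trans (add_le_add (norm_mul_le _ _) (norm_mul_le _ _))
    _ ≤ 2 * ‖X‖ := by nlinarith [norm_nonneg X]
  rw [← two_smul ℂ, norm_smul] at h2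
  norm_num at h2
  exact h2

theorem IsJointEffect.norm_commutator_le {R Q : A} (h : IsJointEffect R P Q) :
    ‖P * Q - Q * P‖ ≤ 2 * √‖P - P ^ 2‖ * √‖Q - Q ^ 2‖ := by
  have hP : star P = P := h.nonneg_left.isSelfAdjoint.star_eq
  have hQ : star Q = Q := h.symm.nonneg_left.isSelfAdjoint.star_eq
  -- `a i = [outcome i is counted by P] - P`, and likewise `b` for `Q`
  set a : Fin 4 → A := ![1 - P, 1 - P, -P, -P]
  set b : Fin 4 → A := ![1 - Q, -Q, 1 - Q, -Q]
  set povm : Fin 4 → A := ![R, P - R, Q - R, 1 + R - P - Q]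
  have hpovm : ∀ i, 0 ≤ povm i := by
    intro i
    fin_cases i
    exacts [h.nonneg, sub_nonneg.2 h.le_left, sub_nonneg.2 h.le_right, h.sub_sub_nonneg]
  obtain ⟨haa, hbb, hab, hba⟩ :
      ∑ i, a i * povm i * star (a i) = P - P ^ 2 ∧ ∑ i, b i * povm i * star (b i) = Q - Q ^ 2 ∧
      ∑ i, a i * povm i * star (b i) = R - P * Q ∧ ∑ i, b i * povm i * star (a i) = R - Q * P := by
    refine ⟨?_, ?_, ?_, ?_⟩ <;>
    · simp only [Fin.sum_univ_four, a, b, povm, Matrix.cons_val_zero, Matrix.cons_val_one,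
        Matrix.cons_val, star_sub, star_one, star_neg, hP, hQ]
      noncomm_ring
  have hPQ := norm_sum_mul_mul_star_le b a povm hpovm
  have hQP := norm_sum_mul_mul_star_le a b povm hpovm
  rw [haa, hbb, hab] at hPQ
  rw [haa, hbb, hba] at hQP
  calc ‖P * Q - Q * P‖ = ‖(R - Q * P) - (R - P * Q)‖ := by congr 1; abel
    _ ≤ ‖R - Q * P‖ + ‖R - P * Q‖ := norm_sub_le _ _
    _ ≤ 2 * √‖P - P ^ 2‖ * √‖Q - Q ^ 2‖ := by linarith

theorem norm_commutator_le_of_approx {Q : A} (hP0 : 0 ≤ P) (hP1 : P ≤ 1)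
    (hQ0 : 0 ≤ Q) (hQ1 : Q ≤ 1) (X Y : A) :
    ‖X * Y - Y * X‖ ≤
      2 * ‖P - X‖ * ‖Q - Y‖ + ‖P - X‖ + ‖Q - Y‖ + ‖P * Q - Q * P‖ := by
  have hPY : ‖P * (Y - Q) - (Y - Q) * P‖ ≤ ‖Q - Y‖ :=
    norm_sub_rev Y Q ▸ norm_commutator_le_of_nonneg_of_le_one hP0 hP1 (Y - Q)
  have hXQ : ‖(X - P) * Q - Q * (X - P)‖ ≤ ‖P - X‖ := by
    rw [norm_sub_rev, ← norm_sub_rev X P]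
    exact norm_commutator_le_of_nonneg_of_le_one hQ0 hQ1 (X - P)
  have hXY : ‖(X - P) * (Y - Q) - (Y - Q) * (X - P)‖ ≤ 2 * ‖P - X‖ * ‖Q - Y‖ := calc
    _ ≤ ‖X - P‖ * ‖Y - Q‖ + ‖Y - Q‖ * ‖X - P‖ :=
      (norm_sub_le _ _).trans (add_le_add (norm_mul_le _ _) (norm_mul_le _ _))
    _ = 2 * ‖P - X‖ * ‖Q - Y‖ := by rw [norm_sub_rev X, norm_sub_rev Y]; ring
  calc ‖X * Y - Y * X‖ = ‖(P * Q - Q * P) + (P * (Y - Q) - (Y - Q) * P) +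
        ((X - P) * Q - Q * (X - P)) + ((X - P) * (Y - Q) - (Y - Q) * (X - P))‖ := by
        congr 1; noncomm_ring
    _ ≤ _ := norm_add₄_le ..
    _ ≤ _ := by linarith

end CStarAlgebra

section PositiveMap

variable {M A F : Type*} [CommRing M] [StarRing M] [PartialOrder M] [StarOrderedRing M]
  [Ring A] [PartialOrder A] [IsOrderedAddMonoid A] [FunLike F M A] [AddMonoidHomClass F M A]

theorem isJointEffect_map_mul (T : F) (hT1 : T 1 = 1) (hT : ∀ m, 0 ≤ m → 0 ≤ T m) {E G : M}
    (hE : IsStarProjection E) (hG : IsStarProjection G) :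
    IsJointEffect (T (E * G)) (T E) (T G) := by
  have hmul {p q : M} (hp : IsStarProjection p) (hq : IsStarProjection q) : 0 ≤ T (p * q) :=
    hT _ (hp.mul hq (Commute.all p q)).nonneg
  refine ⟨hmul hE hG, ?_, ?_, ?_⟩
  · rw [← sub_nonneg, ← map_sub, ← mul_one_sub]
    exact hmul hE hG.one_sub
  · rw [← sub_nonneg, ← map_sub, ← one_sub_mul]
    exact hmul hE.one_sub hG
  · rw [← sub_nonneg, ← hT1, ← map_add, ← map_add, ← map_sub]
    convert hmul hE.one_sub hG.one_sub using 2
    ring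

end PositiveMap

theorem tradeoff_single_outcome_general {H : Type*} [NormedAddCommGroup H] [InnerProductSpace ℂ H]
    [CompleteSpace H] {M : Type*} [NormedCommRing M] [StarRing M]
    [NormedAlgebra ℂ M] [PartialOrder M] [StarOrderedRing M]
    (T : M →ₗ[ℂ] (H →L[ℂ] H)) (hT1 : T 1 = 1)
    (hTpos : ∀ m : M, 0 ≤ m → (T m).IsPositive)
    (E F : M) (hE : IsSelfAdjoint E) (hE2 : E = E ^ 2)
    (hF : IsSelfAdjoint F) (hF2 : F = F ^ 2)
    (A B : H →L[ℂ] H) (hA0 : A.IsPositive) (hA1 : (1 - A).IsPositive)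
    (hB0 : B.IsPositive) (hB1 : (1 - B).IsPositive) :
    ‖A * B - B * A‖ ≤ 2 * ‖T E - A‖ * ‖T F - B‖ + ‖T E - A‖ + ‖T F - B‖ +
      2 * Real.sqrt (2 * ‖T E - A‖ + ‖A - A ^ 2‖) *
        Real.sqrt (2 * ‖T F - B‖ + ‖B - B ^ 2‖) := by
  have hpos (m : M) (hm : 0 ≤ m) : 0 ≤ T m := (T m).nonneg_iff_isPositive.2 (hTpos m hm)
  have hJ : IsJointEffect (T (E * F)) (T E) (T F) :=
    isJointEffect_map_mul T hT1 hpos ⟨(hE2.trans (sq E)).symm, hE⟩ ⟨(hF2.trans (sq F)).symm, hF⟩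
  have norm_le_one {X : H →L[ℂ] H} (h0 : X.IsPositive) (h1 : (1 - X).IsPositive) : ‖X‖ ≤ 1 :=
    (CStarAlgebra.norm_le_one_iff_of_nonneg X (X.nonneg_iff_isPositive.2 h0)).2
      (sub_nonneg.1 ((1 - X).nonneg_iff_isPositive.2 h1))
  have hAE : ‖T E - T E ^ 2‖ ≤ 2 * ‖T E - A‖ + ‖A - A ^ 2‖ :=
    norm_sub_sq_le_of_norm_le_one
      (norm_one_sub_le_one_of_nonneg_of_le_one hJ.nonneg_left hJ.le_one_left) (norm_le_one hA0 hA1)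
  have hBF : ‖T F - T F ^ 2‖ ≤ 2 * ‖T F - B‖ + ‖B - B ^ 2‖ :=
    norm_sub_sq_le_of_norm_le_one
      (norm_one_sub_le_one_of_nonneg_of_le_one hJ.symm.nonneg_left hJ.symm.le_one_left)
      (norm_le_one hB0 hB1)
  calc ‖A * B - B * A‖
      ≤ 2 * ‖T E - A‖ * ‖T F - B‖ + ‖T E - A‖ + ‖T F - B‖ + ‖T E * T F - T F * T E‖ :=
        norm_commutator_le_of_approx hJ.nonneg_left hJ.le_one_left
          hJ.symm.nonneg_left hJ.symm.le_one_left A B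
    _ ≤ 2 * ‖T E - A‖ * ‖T F - B‖ + ‖T E - A‖ + ‖T F - B‖ +
          2 * √‖T E - T E ^ 2‖ * √‖T F - T F ^ 2‖ := by
        gcongr
        exact hJ.norm_commutator_le
    _ ≤ _ := by gcongr

theorem tradeoff_single_outcome {H : Type*} [NormedAddCommGroup H] [InnerProductSpace ℂ H]
    [CompleteSpace H] {M : Type*} [NormedCommRing M] [StarRing M] [CStarRing M]
    [NormedAlgebra ℂ M] [PartialOrder M] [StarOrderedRing M]
    (T : M →ₗ[ℂ] (H →L[ℂ] H)) (hT1 : T 1 = 1)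
    (hTpos : ∀ m : M, 0 ≤ m → (T m).IsPositive)
    (E F : M) (hE : IsSelfAdjoint E) (hE2 : E = E ^ 2)
    (hF : IsSelfAdjoint F) (hF2 : F = F ^ 2)
    (A B : H →L[ℂ] H) (hA : IsSelfAdjoint A) (hA0 : A.IsPositive) (hA1 : (1 - A).IsPositive)
    (hB : IsSelfAdjoint B) (hB0 : B.IsPositive) (hB1 : (1 - B).IsPositive) :
    ‖A * B - B * A‖ ≤ 2 * ‖T E - A‖ * ‖T F - B‖ + ‖T E - A‖ + ‖T F - B‖ +
      2 * Real.sqrt (2 * ‖T E - A‖ + ‖A - A ^ 2‖) *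
        Real.sqrt (2 * ‖T F - B‖ + ‖B - B ^ 2‖) :=
  tradeoff_single_outcome_general T hT1 hTpos E F hE hE2 hF hF2 A B hA0 hA1 hB0 hB1
end

section
/- Let A = {A_a} and B = {B_b} be projection valued measures on a finite-dimensional Hilbert space with finite outcome sets, and suppose there exist a POVM F = {F_x} and functions f_A, f_B such that the marginals f_A(F) = A and f_B(F) = B exactly (i.e., A and B are simultaneously measurable). Then all elements commute: [A_a, B_b] = 0 for all a, b. -/
/-!
An effect `0 ≤ a ≤ e` below a projection `e` satisfies `e a = a = a e`, so it commutes with `e`,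
and so does an effect below `1 - e`. Since `∑ F = 1`, each `F x` lies below `A a` (if `fA x = a`)
or below `1 - A a = ∑_{fA y ≠ a} F y` (otherwise). Hence `A a` commutes with every `F x`, and
therefore with every `B b`, which is a sum of `F x`'s.
-/

open Finset

section CStarAlgebra

variable {A : Type*} [CStarAlgebra A] [PartialOrder A] [StarOrderedRing A]

lemma IsStarProjection.commute_of_nonneg_of_le {e a : A} (he : IsStarProjection e)
    (ha : 0 ≤ a) (hae : a ≤ e) : Commute e a :=
  let ⟨hae', hea⟩ := he.mul_right_and_mul_left_of_nonneg_of_le ha hae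
  hea.trans hae'.symm

lemma IsStarProjection.commute_of_nonneg_of_le_one_sub {e a : A} (he : IsStarProjection e)
    (ha : 0 ≤ a) (hae : a ≤ 1 - e) : Commute e a := by
  simpa using ((Commute.one_left a).sub_left (he.one_sub.commute_of_nonneg_of_le ha hae))

lemma commute_sum_of_isStarProjection {ι : Type*} [Fintype ι] {F : ι → A}
    (hF : ∀ i, 0 ≤ F i) (hF1 : ∑ i, F i = 1) {s : Finset ι}
    (hs : IsStarProjection (∑ j ∈ s, F j)) (i : ι) : Commute (∑ j ∈ s, F j) (F i) := by
  classical
  by_cases hi : i ∈ s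
  · exact hs.commute_of_nonneg_of_le (hF i) (single_le_sum (fun j _ => hF j) hi)
  · refine hs.commute_of_nonneg_of_le_one_sub (hF i) ?_
    rw [← hF1, ← sum_add_sum_compl s F, add_sub_cancel_left]
    exact single_le_sum (fun j _ => hF j) (mem_compl.mpr hi)

end CStarAlgebra

theorem pvm_simultaneous_implies_commute_general {H : Type*} [NormedAddCommGroup H]
    [InnerProductSpace ℂ H] [FiniteDimensional ℂ H]
    {ΩA ΩB Ω : Type*} [Fintype Ω]
    [DecidableEq ΩA] [DecidableEq ΩB]
    (A : ΩA → (H →L[ℂ] H)) (B : ΩB → (H →L[ℂ] H))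
    (hAproj : ∀ a, IsSelfAdjoint (A a) ∧ A a * A a = A a)
    (F : Ω → (H →L[ℂ] H)) (hFpos : ∀ x, (F x).IsPositive) (hFsum : ∑ x, F x = 1)
    (fA : Ω → ΩA) (fB : Ω → ΩB)
    (hfA : ∀ a, A a = ∑ x ∈ Finset.univ.filter (fun x => fA x = a), F x)
    (hfB : ∀ b, B b = ∑ x ∈ Finset.univ.filter (fun x => fB x = b), F x) :
    ∀ a b, A a * B b = B b * A a := by
  intro a b
  have hA : IsStarProjection (A a) := ⟨(hAproj a).2, (hAproj a).1⟩
  have hF : ∀ x, 0 ≤ F x := fun x => (F x).nonneg_iff_isPositive.mpr (hFpos x)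
  have hAF : ∀ x, Commute (A a) (F x) := by
    rw [hfA a] at hA ⊢
    exact commute_sum_of_isStarProjection hF hFsum hA
  rw [hfB b]
  exact (Commute.sum_right _ _ _ fun x _ => hAF x).eq

theorem pvm_simultaneous_implies_commute {H : Type*} [NormedAddCommGroup H]
    [InnerProductSpace ℂ H] [FiniteDimensional ℂ H]
    {ΩA ΩB Ω : Type*} [Fintype ΩA] [Fintype ΩB] [Fintype Ω]
    [DecidableEq ΩA] [DecidableEq ΩB]
    (A : ΩA → (H →L[ℂ] H)) (B : ΩB → (H →L[ℂ] H))
    (hAproj : ∀ a, IsSelfAdjoint (A a) ∧ A a * A a = A a) (hAsum : ∑ a, A a = 1)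
    (hBproj : ∀ b, IsSelfAdjoint (B b) ∧ B b * B b = B b) (hBsum : ∑ b, B b = 1)
    (F : Ω → (H →L[ℂ] H)) (hFpos : ∀ x, (F x).IsPositive) (hFsum : ∑ x, F x = 1)
    (fA : Ω → ΩA) (fB : Ω → ΩB)
    (hfA : ∀ a, A a = ∑ x ∈ Finset.univ.filter (fun x => fA x = a), F x)
    (hfB : ∀ b, B b = ∑ x ∈ Finset.univ.filter (fun x => fB x = b), F x) :
    ∀ a b, A a * B b = B b * A a :=
  pvm_simultaneous_implies_commute_general A B hAproj F hFpos hFsum fA fB hfA hfB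
end

section
/- Let A = {A_a} and B = {B_b} be POVMs on a Hilbert space that are simultaneously measurable, i.e., there exists a POVM F and functions f_A, f_B with f_A(F) = A and f_B(F) = B. Then V(A)^{1/2}·V(B)^{1/2} ≥ (1/2)·max_{a,b} ‖[A_a, B_b]‖, where V(A) := max_a ‖A_a - A_a²‖ and V(B) := max_b ‖B_b - B_b²‖. -/
/-!
Write `A a = x + p` and `B b = x + q`, where `x, p, q, r` are the sums of `F` over the outcomes
with `(fA, fB)` in `{a} × {b}`, `{a} × {b}ᶜ`, `{a}ᶜ × {b}`, `{a}ᶜ × {b}ᶜ`. With `P = (q, r, x, p)`,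
`L = (A a, A a, 1 - A a, 1 - A a)` and `R = (1 - B b, -B b, B b - 1, B b)` one checks
`A a * B b - x = ∑ Lᵢ* Pᵢ Rᵢ`, `A a - (A a)² = ∑ Lᵢ* Pᵢ Lᵢ` and `B b - (B b)² = ∑ Rᵢ* Pᵢ Rᵢ`, so
the Cauchy–Schwarz inequality of the Hilbert C⋆-module of 4-tuples over the operator algebra bounds
`‖A a * B b - x‖` by `√‖A a - (A a)²‖ * √‖B b - (B b)²‖`. Finally `x` is self-adjoint, so the
commutator is `c - c*` with `c = A a * B b - x`.
-/

namespace CStarAlgebra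

variable {A : Type*} [CStarAlgebra A] [PartialOrder A] [StarOrderedRing A]

theorem norm_sum_star_mul_le {ι : Type*} [Fintype ι] (x y : ι → A) :
    ‖∑ i, star (x i) * y i‖ ≤ √‖∑ i, star (x i) * x i‖ * √‖∑ i, star (y i) * y i‖ := by
  have h := CStarModule.norm_inner_le (A := A) (WithCStarModule A (ι → A))
    (x := (WithCStarModule.equiv A (ι → A)).symm (star y))
    (y := (WithCStarModule.equiv A (ι → A)).symm (star x))
  simp only [WithCStarModule.pi_inner, WithCStarModule.pi_norm, WithCStarModule.inner_def,
    WithCStarModule.equiv_symm_pi_apply, Pi.star_apply, star_star] at h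
  rwa [mul_comm] at h

theorem norm_sum_star_mul_mul_le {ι : Type*} [Fintype ι] {p : ι → A} (hp : ∀ i, 0 ≤ p i)
    (l r : ι → A) :
    ‖∑ i, star (l i) * p i * r i‖ ≤
      √‖∑ i, star (l i) * p i * l i‖ * √‖∑ i, star (r i) * p i * r i‖ := by
  have hsqrt : ∀ i (x y : A),
      star (CFC.sqrt (p i) * x) * (CFC.sqrt (p i) * y) = star x * p i * y := fun i x y => by
    rw [star_mul, (CFC.sqrt_nonneg (p i)).isSelfAdjoint.star_eq, mul_assoc, ← mul_assoc _ _ y,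
      CFC.sqrt_mul_sqrt_self (p i) (hp i), ← mul_assoc]
  simpa only [hsqrt] using
    norm_sum_star_mul_le (fun i => CFC.sqrt (p i) * l i) (fun i => CFC.sqrt (p i) * r i)

theorem norm_mul_sub_le_of_add_eq_one {x p q r : A} (hx : 0 ≤ x) (hp : 0 ≤ p) (hq : 0 ≤ q)
    (hr : 0 ≤ r) (hsum : x + p + q + r = 1) :
    ‖(x + p) * (x + q) - x‖ ≤ √‖(x + p) - (x + p) ^ 2‖ * √‖(x + q) - (x + q) ^ 2‖ := by
  have ha : star (x + p) = x + p := (add_nonneg hx hp).isSelfAdjoint.star_eq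
  have hb : star (x + q) = x + q := (add_nonneg hx hq).isSelfAdjoint.star_eq
  have hr' : r = 1 - x - p - q := by rw [← hsum]; abel
  have hcs := norm_sum_star_mul_mul_le (p := ![q, r, x, p]) (fun i => by fin_cases i <;> assumption)
    ![x + p, x + p, 1 - (x + p), 1 - (x + p)] ![1 - (x + q), -(x + q), -(1 - (x + q)), x + q]
  simp only [Fin.sum_univ_four, Matrix.cons_val, star_sub, star_neg, star_one, ha, hb] at hcs
  convert hcs using 3 <;> rw [hr'] <;> noncomm_ring

theorem norm_commutator_le_of_add_eq_one {x p q r : A} (hx : 0 ≤ x) (hp : 0 ≤ p) (hq : 0 ≤ q)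
    (hr : 0 ≤ r) (hsum : x + p + q + r = 1) :
    ‖(x + p) * (x + q) - (x + q) * (x + p)‖ ≤
      2 * (√‖(x + p) - (x + p) ^ 2‖ * √‖(x + q) - (x + q) ^ 2‖) := by
  set c := (x + p) * (x + q) - x
  have hstar : star c = (x + q) * (x + p) - x := by
    rw [star_sub, star_mul, (add_nonneg hx hp).isSelfAdjoint.star_eq,
      (add_nonneg hx hq).isSelfAdjoint.star_eq, hx.isSelfAdjoint.star_eq]
  calc ‖(x + p) * (x + q) - (x + q) * (x + p)‖
      _ = ‖c - star c‖ := by rw [hstar, sub_sub_sub_cancel_right]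
      _ ≤ ‖c‖ + ‖star c‖ := norm_sub_le _ _
      _ = 2 * ‖c‖ := by rw [norm_star, two_mul]
      _ ≤ _ := by gcongr; exact norm_mul_sub_le_of_add_eq_one hx hp hq hr hsum

theorem norm_commutator_sum_le {Ω : Type*} [Fintype Ω] [DecidableEq Ω] {F : Ω → A}
    (hF : ∀ ω, 0 ≤ F ω) (hsum : ∑ ω, F ω = 1) (s t : Finset Ω) :
    ‖(∑ ω ∈ s, F ω) * (∑ ω ∈ t, F ω) - (∑ ω ∈ t, F ω) * (∑ ω ∈ s, F ω)‖ ≤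
      2 * (√‖(∑ ω ∈ s, F ω) - (∑ ω ∈ s, F ω) ^ 2‖ * √‖(∑ ω ∈ t, F ω) - (∑ ω ∈ t, F ω) ^ 2‖) := by
  have hpos : ∀ u : Finset Ω, 0 ≤ ∑ ω ∈ u, F ω := fun u => Finset.sum_nonneg fun ω _ => hF ω
  have hs : ∑ ω ∈ s, F ω = ∑ ω ∈ s ∩ t, F ω + ∑ ω ∈ s \ t, F ω :=
    (Finset.sum_inter_add_sum_sdiff s t F).symm
  have ht : ∑ ω ∈ t, F ω = ∑ ω ∈ s ∩ t, F ω + ∑ ω ∈ t \ s, F ω := by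
    rw [Finset.inter_comm, Finset.sum_inter_add_sum_sdiff]
  have hpart :
      ∑ ω ∈ s ∩ t, F ω + ∑ ω ∈ s \ t, F ω + ∑ ω ∈ t \ s, F ω + ∑ ω ∈ (s ∪ t)ᶜ, F ω = 1 := by
    rw [← hs, ← Finset.sum_union Finset.disjoint_sdiff, Finset.union_sdiff_self_eq_union,
      Finset.sum_add_sum_compl, hsum]
  rw [hs, ht]
  exact norm_commutator_le_of_add_eq_one (hpos _) (hpos _) (hpos _) (hpos _) hpart

end CStarAlgebra

open CStarAlgebra

theorem simultaneous_measurable_intrinsic_uncertainty_general {H : Type*} [NormedAddCommGroup H]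
    [InnerProductSpace ℂ H] [CompleteSpace H]
    {ΩA ΩB Ω : Type*} [Fintype ΩA] [Fintype ΩB] [Fintype Ω]
    [Nonempty ΩA] [Nonempty ΩB]
    [DecidableEq ΩA] [DecidableEq ΩB]
    (A : ΩA → (H →L[ℂ] H)) (B : ΩB → (H →L[ℂ] H))
    (F : Ω → (H →L[ℂ] H)) (hFpos : ∀ x, (F x).IsPositive) (hFsum : ∑ x, F x = 1)
    (fA : Ω → ΩA) (fB : Ω → ΩB)
    (hfA : ∀ a, A a = ∑ x ∈ Finset.univ.filter (fun x => fA x = a), F x)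
    (hfB : ∀ b, B b = ∑ x ∈ Finset.univ.filter (fun x => fB x = b), F x) :
    Real.sqrt (⨆ a, ‖A a - (A a) ^ 2‖) * Real.sqrt (⨆ b, ‖B b - (B b) ^ 2‖) ≥
      (1 / 2) * ⨆ ab : ΩA × ΩB, ‖A ab.1 * B ab.2 - B ab.2 * A ab.1‖ := by
  classical
  have hF : ∀ x, 0 ≤ F x := fun x => (ContinuousLinearMap.nonneg_iff_isPositive _).2 (hFpos x)
  have hpair (a : ΩA) (b : ΩB) : ‖A a * B b - B b * A a‖ ≤
      2 * (√(⨆ a, ‖A a - A a ^ 2‖) * √(⨆ b, ‖B b - B b ^ 2‖)) := by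
    rw [hfA, hfB]
    refine (norm_commutator_sum_le hF hFsum _ _).trans ?_
    rw [← hfA, ← hfB]
    gcongr
    · exact le_ciSup (Set.finite_range fun a => ‖A a - A a ^ 2‖).bddAbove a
    · exact le_ciSup (Set.finite_range fun b => ‖B b - B b ^ 2‖).bddAbove b
  have hsup := ciSup_le fun ab : ΩA × ΩB => hpair ab.1 ab.2
  linarith

theorem simultaneous_measurable_intrinsic_uncertainty {H : Type*} [NormedAddCommGroup H]
    [InnerProductSpace ℂ H] [CompleteSpace H]
    {ΩA ΩB Ω : Type*} [Fintype ΩA] [Fintype ΩB] [Fintype Ω]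
    [Nonempty ΩA] [Nonempty ΩB]
    [DecidableEq ΩA] [DecidableEq ΩB]
    (A : ΩA → (H →L[ℂ] H)) (B : ΩB → (H →L[ℂ] H))
    (hApos : ∀ a, (A a).IsPositive) (hAsum : ∑ a, A a = 1)
    (hBpos : ∀ b, (B b).IsPositive) (hBsum : ∑ b, B b = 1)
    (F : Ω → (H →L[ℂ] H)) (hFpos : ∀ x, (F x).IsPositive) (hFsum : ∑ x, F x = 1)
    (fA : Ω → ΩA) (fB : Ω → ΩB)
    (hfA : ∀ a, A a = ∑ x ∈ Finset.univ.filter (fun x => fA x = a), F x)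
    (hfB : ∀ b, B b = ∑ x ∈ Finset.univ.filter (fun x => fB x = b), F x) :
    Real.sqrt (⨆ a, ‖A a - (A a) ^ 2‖) * Real.sqrt (⨆ b, ‖B b - (B b) ^ 2‖) ≥
      (1 / 2) * ⨆ ab : ΩA × ΩB, ‖A ab.1 * B ab.2 - B ab.2 * A ab.1‖ :=
  simultaneous_measurable_intrinsic_uncertainty_general A B F hFpos hFsum fA fB hfA hfB
end

section
/- Let A = {A_a}, B = {B_b} be POVMs and suppose F = {F_x} is a projection valued measure (each F_x a projection, mutually orthogonal, summing to 1) with marginal maps f_A, f_B. Then with α := max_a ‖f_A(F)_a - A_a‖ and β := max_b ‖f_B(F)_b - B_b‖, one has 2αβ + α + β ≥ max_{a,b} ‖[A_a, B_b]‖. -/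
/-!
With `P = f_A(F)_a` and `Q = f_B(F)_b`, which are commuting projections, write `A = P - (P - A)`
and `B = Q - (Q - B)`. Since `⁅P, Q⁆ = 0`, expanding leaves `⁅P - A, Q - B⁆`, of norm at most
`2αβ`, and two commutators of a projection with an operator of norm at most `β`, resp. `α`.
A commutator with a projection `p` costs nothing in norm: `2p - 1` is unitary and
`⁅2p - 1, x⁆ = 2⁅p, x⁆`.
-/

theorem norm_lie_le_two_mul {E : Type*} [NormedRing E] (x y : E) : ‖⁅x, y⁆‖ ≤ 2 * ‖x‖ * ‖y‖ := by
  rw [Ring.lie_def]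
  calc ‖x * y - y * x‖ ≤ ‖x * y‖ + ‖y * x‖ := norm_sub_le _ _
    _ ≤ ‖x‖ * ‖y‖ + ‖y‖ * ‖x‖ := add_le_add (norm_mul_le _ _) (norm_mul_le _ _)
    _ = 2 * ‖x‖ * ‖y‖ := by ring

section CStarRing

variable {E : Type*} [NormedRing E] [StarRing E] [CStarRing E]

theorem IsStarProjection.norm_lie_le [NormedSpace ℝ E] {p : E} (hp : IsStarProjection p)
    (x : E) : ‖⁅p, x⁆‖ ≤ ‖x‖ := by
  have hu := hp.two_mul_sub_one_mem_unitary
  have h : ⁅2 * p - 1, x⁆ = (2 : ℝ) • ⁅p, x⁆ := by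
    simp only [Ring.lie_def, two_smul]; noncomm_ring
  have : 2 * ‖⁅p, x⁆‖ ≤ 2 * ‖x‖ :=
    calc 2 * ‖⁅p, x⁆‖ = ‖(2 * p - 1) * x - x * (2 * p - 1)‖ := by
          rw [← Ring.lie_def, h, norm_smul, Real.norm_two]
      _ ≤ ‖(2 * p - 1) * x‖ + ‖x * (2 * p - 1)‖ := norm_sub_le _ _
      _ = 2 * ‖x‖ := by
          rw [CStarRing.norm_mem_unitary_mul x hu, CStarRing.norm_mul_mem_unitary x hu, two_mul]
  linarith

theorem Commute.norm_lie_le_of_isStarProjection [NormedSpace ℝ E] {p q : E}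
    (hpq : Commute p q) (hp : IsStarProjection p) (hq : IsStarProjection q) (a b : E) :
    ‖⁅a, b⁆‖ ≤ 2 * ‖p - a‖ * ‖q - b‖ + ‖p - a‖ + ‖q - b‖ := by
  have hdecomp : ⁅a, b⁆ = ⁅p - a, q - b⁆ + ⁅p, b - q⁆ + ⁅q, p - a⁆ + ⁅p, q⁆ := by
    simp only [Ring.lie_def]; noncomm_ring
  have hpq' : ⁅p, q⁆ = 0 := by rw [Ring.lie_def, hpq.eq, sub_self]
  calc ‖⁅a, b⁆‖ ≤ ‖⁅p - a, q - b⁆‖ + ‖⁅p, b - q⁆‖ + ‖⁅q, p - a⁆‖ := by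
        rw [hdecomp, hpq', add_zero]; exact norm_add₃_le
    _ ≤ 2 * ‖p - a‖ * ‖q - b‖ + ‖q - b‖ + ‖p - a‖ := by
        gcongr
        exacts [norm_lie_le_two_mul _ _, (hp.norm_lie_le _).trans_eq (norm_sub_rev _ _),
          hq.norm_lie_le _]
    _ = _ := by ring

end CStarRing

section Orthogonal

variable {R ι : Type*} [NonUnitalSemiring R] {F : ι → R}

theorem Finset.commute_sum_sum_of_pairwise_mul_eq_zero
    (hF : Pairwise fun i j => F i * F j = 0) (s t : Finset ι) :
    Commute (∑ i ∈ s, F i) (∑ j ∈ t, F j) := by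
  refine Commute.sum_left _ _ _ fun i _ => Commute.sum_right _ _ _ fun j _ => ?_
  rcases eq_or_ne i j with rfl | hij
  · exact Commute.refl _
  · exact (hF hij).trans (hF hij.symm).symm

theorem Finset.isStarProjection_sum_of_pairwise_mul_eq_zero [StarRing R]
    (hproj : ∀ i, IsStarProjection (F i)) (hF : Pairwise fun i j => F i * F j = 0)
    (s : Finset ι) : IsStarProjection (∑ i ∈ s, F i) := by
  classical
  induction s using Finset.induction_on with
  | empty => simp [IsStarProjection.zero]
  | insert i s hi ih =>
    rw [Finset.sum_insert hi]
    refine (hproj i).add ih ?_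
    rw [Finset.mul_sum]
    exact Finset.sum_eq_zero fun j hj => hF (ne_of_mem_of_not_mem hj hi).symm

end Orthogonal

theorem tradeoff_pvm_instrument_general {H : Type*} [NormedAddCommGroup H]
    [InnerProductSpace ℂ H] [CompleteSpace H]
    {ΩA ΩB Ω : Type*} [Fintype ΩA] [Fintype ΩB] [Fintype Ω]
    [DecidableEq ΩA] [DecidableEq ΩB]
    (A : ΩA → (H →L[ℂ] H)) (B : ΩB → (H →L[ℂ] H))
    (F : Ω → (H →L[ℂ] H))
    (hFproj : ∀ x, IsSelfAdjoint (F x) ∧ F x * F x = F x)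
    (hForth : ∀ x y, x ≠ y → F x * F y = 0)
    (fA : Ω → ΩA) (fB : Ω → ΩB) :
    2 * (⨆ a, ‖(∑ x ∈ Finset.univ.filter (fun x => fA x = a), F x) - A a‖) *
        (⨆ b, ‖(∑ x ∈ Finset.univ.filter (fun x => fB x = b), F x) - B b‖) +
      (⨆ a, ‖(∑ x ∈ Finset.univ.filter (fun x => fA x = a), F x) - A a‖) +
      (⨆ b, ‖(∑ x ∈ Finset.univ.filter (fun x => fB x = b), F x) - B b‖) ≥
    ⨆ ab : ΩA × ΩB, ‖A ab.1 * B ab.2 - B ab.2 * A ab.1‖ := by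
  set α := ⨆ a, ‖(∑ x ∈ Finset.univ.filter (fun x => fA x = a), F x) - A a‖
  set β := ⨆ b, ‖(∑ x ∈ Finset.univ.filter (fun x => fB x = b), F x) - B b‖
  have hα₀ : 0 ≤ α := Real.iSup_nonneg fun _ => norm_nonneg _
  have hβ₀ : 0 ≤ β := Real.iSup_nonneg fun _ => norm_nonneg _
  have hproj x : IsStarProjection (F x) := ⟨(hFproj x).2, (hFproj x).1⟩
  refine Real.iSup_le (fun ⟨a, b⟩ => ?_) (by positivity)
  have hbound := (Finset.commute_sum_sum_of_pairwise_mul_eq_zero hForth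
    (Finset.univ.filter (fun x => fA x = a)) (Finset.univ.filter (fun x => fB x = b))
    ).norm_lie_le_of_isStarProjection
    (Finset.isStarProjection_sum_of_pairwise_mul_eq_zero hproj hForth _)
    (Finset.isStarProjection_sum_of_pairwise_mul_eq_zero hproj hForth _) (A a) (B b)
  rw [Ring.lie_def] at hbound
  refine hbound.trans ?_
  gcongr
  all_goals exact Finite.le_ciSup_of_le _ le_rfl

theorem tradeoff_pvm_instrument {H : Type*} [NormedAddCommGroup H]
    [InnerProductSpace ℂ H] [CompleteSpace H]
    {ΩA ΩB Ω : Type*} [Fintype ΩA] [Fintype ΩB] [Fintype Ω]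
    [Nonempty ΩA] [Nonempty ΩB] [DecidableEq ΩA] [DecidableEq ΩB] [DecidableEq Ω]
    (A : ΩA → (H →L[ℂ] H)) (B : ΩB → (H →L[ℂ] H))
    (hApos : ∀ a, (A a).IsPositive) (hAsum : ∑ a, A a = 1)
    (hBpos : ∀ b, (B b).IsPositive) (hBsum : ∑ b, B b = 1)
    (F : Ω → (H →L[ℂ] H))
    (hFproj : ∀ x, IsSelfAdjoint (F x) ∧ F x * F x = F x)
    (hForth : ∀ x y, x ≠ y → F x * F y = 0)
    (hFsum : ∑ x, F x = 1)
    (fA : Ω → ΩA) (fB : Ω → ΩB) :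
    2 * (⨆ a, ‖(∑ x ∈ Finset.univ.filter (fun x => fA x = a), F x) - A a‖) *
        (⨆ b, ‖(∑ x ∈ Finset.univ.filter (fun x => fB x = b), F x) - B b‖) +
      (⨆ a, ‖(∑ x ∈ Finset.univ.filter (fun x => fA x = a), F x) - A a‖) +
      (⨆ b, ‖(∑ x ∈ Finset.univ.filter (fun x => fB x = b), F x) - B b‖) ≥
    ⨆ ab : ΩA × ΩB, ‖A ab.1 * B ab.2 - B ab.2 * A ab.1‖ :=
  tradeoff_pvm_instrument_general A B F hFproj hForth fA fB
end

section
/- Let A = {A_a}, B = {B_b} be projection valued measures on a Hilbert space, F = {F_x} any POVM and f_A, f_B coarse-graining functions. Set α := max_a ‖f_A(F)_a - A_a‖ and β := max_b ‖f_B(F)_b - B_b‖. Then 2αβ + α + β + 4α^{1/2}β^{1/2} ≥ max_{a,b} ‖[A_a, B_b]‖. -/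
/-!
Write `G = f_A(F)_a`, `K = f_B(F)_b` and `J = F(f_A⁻¹(a) ∩ f_B⁻¹(b))`, and split
`[A_a, B_b] = [A_a - G, B_b] + [G, B_b - K] + [G, K]`.
Both `B_b` and `G` lie between `0` and `1`, so `‖2 B_b - 1‖, ‖2 G - 1‖ ≤ 1`, which bounds the
first two commutators by `α` and `β`. For the third,
`J - G K = ∑ₓ (𝟙[f_A x = a] - G) Fₓ (𝟙[f_B x = b] - K)`,
so a Cauchy–Schwarz inequality for the positive weights `Fₓ` gives
`‖J - G K‖² ≤ ‖G - G²‖ ‖K - K²‖`, and `‖G - G²‖ ≤ ‖G - A_a‖ ≤ α` because `A_a` is a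
projection. Since `[G, K] = (J - G K)⋆ - (J - G K)`, altogether
`‖[A_a, B_b]‖ ≤ α + β + 2 √α √β`.
-/

open Finset

lemma norm_commutator_le_mul_norm_two_smul_sub_one {R : Type*} [NormedRing R] [NormedAlgebra ℝ R]
    (x y : R) : ‖x * y - y * x‖ ≤ ‖x‖ * ‖(2 : ℝ) • y - 1‖ := by
  have h : (2 : ℝ) • (x * y - y * x) = x * ((2 : ℝ) • y - 1) - ((2 : ℝ) • y - 1) * x := by
    simp only [mul_sub, sub_mul, mul_smul_comm, smul_mul_assoc, mul_one, one_mul]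
    module
  have h2 : 2 * ‖x * y - y * x‖ ≤ 2 * (‖x‖ * ‖(2 : ℝ) • y - 1‖) := by
    calc 2 * ‖x * y - y * x‖ = ‖(2 : ℝ) • (x * y - y * x)‖ := by rw [norm_smul]; norm_num
      _ ≤ ‖x‖ * ‖(2 : ℝ) • y - 1‖ + ‖(2 : ℝ) • y - 1‖ * ‖x‖ := by
        rw [h]; exact (norm_sub_le _ _).trans (add_le_add (norm_mul_le _ _) (norm_mul_le _ _))
      _ = 2 * (‖x‖ * ‖(2 : ℝ) • y - 1‖) := by ring
  linarith

lemma sum_ite_sub_mul_mul_ite_sub {ι R : Type*} [Fintype ι] [DecidableEq ι] [Ring R]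
    (F : ι → R) (hF : ∑ i, F i = 1) (s t : Finset ι) :
    ∑ i, ((if i ∈ s then 1 else 0) - ∑ j ∈ s, F j) * F i * ((if i ∈ t then 1 else 0) - ∑ j ∈ t, F j)
      = ∑ i ∈ s ∩ t, F i - (∑ i ∈ s, F i) * ∑ i ∈ t, F i := by
  simp only [sub_mul, mul_sub, sum_sub_distrib, ← sum_mul, ← mul_sum, ite_mul, mul_ite,
    one_mul, mul_one, zero_mul, mul_zero, sum_ite_mem, univ_inter, hF, inter_comm t s]
  noncomm_ring

section CStarAlgebra

variable {A : Type*} [CStarAlgebra A] [PartialOrder A] [StarOrderedRing A]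

open WithCStarModule in
open scoped InnerProductSpace in
lemma norm_sum_star_mul_mul_sq_le {ι : Type*} [Fintype ι] {c : ι → A} (hc : ∀ i, 0 ≤ c i)
    (x y : ι → A) :
    ‖∑ i, star (x i) * c i * y i‖ ^ 2
      ≤ ‖∑ i, star (x i) * c i * x i‖ * ‖∑ i, star (y i) * c i * y i‖ := by
  -- Cauchy–Schwarz in the Hilbert C⋆-module `A^ι`, after writing `c i = star (b i) * b i`.
  choose b hb using fun i => CStarAlgebra.nonneg_iff_eq_star_mul_self.mp (hc i)
  let toMod (z : ι → A) : C⋆ᵐᵒᵈ(A, ι → A) := (equiv A _).symm fun i => star (b i * z i)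
  have inner_toMod (z w : ι → A) : ⟪toMod w, toMod z⟫_A = ∑ i, star (z i) * c i * w i := by
    simp [toMod, pi_inner, inner_def, hb, mul_assoc]
  have hcs := CStarModule.norm_inner_le (A := A) (C⋆ᵐᵒᵈ(A, ι → A)) (x := toMod y) (y := toMod x)
  rw [inner_toMod] at hcs
  calc ‖∑ i, star (x i) * c i * y i‖ ^ 2 ≤ (‖toMod y‖ * ‖toMod x‖) ^ 2 := by gcongr
    _ = ‖∑ i, star (x i) * c i * x i‖ * ‖∑ i, star (y i) * c i * y i‖ := by
      rw [mul_pow, CStarModule.norm_sq_eq A, CStarModule.norm_sq_eq A, inner_toMod, inner_toMod,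
        mul_comm]

lemma norm_two_smul_sub_one_le_one {y : A} (hy : IsSelfAdjoint y) (hy' : 0 ≤ y - y * y) :
    ‖(2 : ℝ) • y - 1‖ ≤ 1 := by
  set z := (2 : ℝ) • y - 1
  have hz : IsSelfAdjoint z := ((IsSelfAdjoint.all (2 : ℝ)).smul hy).sub (.one A)
  have hzz : z * z = 1 - (4 : ℝ) • (y - y * y) := by
    simp only [z, mul_sub, sub_mul, mul_smul_comm, smul_mul_assoc, mul_one, one_mul]
    module
  have hle : ‖z * z‖ ≤ 1 := by
    rw [CStarAlgebra.norm_le_one_iff_of_nonneg _ hz.mul_self_nonneg, hzz]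
    exact sub_le_self _ (smul_nonneg (by norm_num) hy')
  rw [hz.norm_mul_self] at hle
  exact (sq_le_one_iff₀ (norm_nonneg z)).mp hle

lemma norm_sub_mul_self_le_norm_sub {y p : A} (hy : IsSelfAdjoint y) (hy' : 0 ≤ y - y * y)
    (hp : IsStarProjection p) : ‖y - y * y‖ ≤ ‖y - p‖ := by
  set d := y - p
  set v := (2 : ℝ) • p - 1
  have hv : ‖v‖ ≤ 1 :=
    norm_two_smul_sub_one_le_one hp.isSelfAdjoint (by rw [hp.isIdempotentElem.eq, sub_self])
  have hyd : y - y * y = -(1 / 2 : ℝ) • (v * d + d * v) - d * d := by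
    simp only [d, v, mul_sub, sub_mul, smul_mul_assoc, mul_smul_comm, one_mul, mul_one,
      hp.isIdempotentElem.eq]
    module
  have hle : y - y * y ≤ -(1 / 2 : ℝ) • (v * d + d * v) := by
    rw [hyd]; exact sub_le_self _ (hy.sub hp.isSelfAdjoint).mul_self_nonneg
  calc ‖y - y * y‖ ≤ ‖-(1 / 2 : ℝ) • (v * d + d * v)‖ :=
        CStarAlgebra.norm_le_norm_of_nonneg_of_le hy' hle
    _ ≤ (1 / 2) * (‖v‖ * ‖d‖ + ‖d‖ * ‖v‖) := by
        rw [norm_smul, norm_neg, Real.norm_of_nonneg (by norm_num)]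
        gcongr
        exact (norm_add_le _ _).trans (add_le_add (norm_mul_le _ _) (norm_mul_le _ _))
    _ ≤ ‖d‖ := by nlinarith [norm_nonneg d]

section POVM

variable {ι : Type*} [Fintype ι] {F : ι → A}

lemma sum_sub_mul_sum_eq_sum_star_mul_mul [DecidableEq ι] (hF : ∀ i, 0 ≤ F i)
    (hF1 : ∑ i, F i = 1) (s t : Finset ι) :
    ∑ i ∈ s ∩ t, F i - (∑ i ∈ s, F i) * ∑ i ∈ t, F i
      = ∑ i, star ((if i ∈ s then 1 else 0) - ∑ j ∈ s, F j) * F i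
          * ((if i ∈ t then 1 else 0) - ∑ j ∈ t, F j) := by
  have hsa : IsSelfAdjoint (∑ j ∈ s, F j) := .of_nonneg (sum_nonneg fun i _ => hF i)
  simp only [star_sub, hsa.star_eq, apply_ite star, star_one, star_zero]
  exact (sum_ite_sub_mul_mul_ite_sub F hF1 s t).symm

lemma sum_sub_mul_self_eq_sum_star_mul_mul [DecidableEq ι] (hF : ∀ i, 0 ≤ F i)
    (hF1 : ∑ i, F i = 1) (s : Finset ι) :
    ∑ i ∈ s, F i - (∑ i ∈ s, F i) * ∑ i ∈ s, F i
      = ∑ i, star ((if i ∈ s then 1 else 0) - ∑ j ∈ s, F j) * F i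
          * ((if i ∈ s then 1 else 0) - ∑ j ∈ s, F j) := by
  rw [← sum_sub_mul_sum_eq_sum_star_mul_mul hF hF1, inter_self]

lemma sum_sub_mul_self_nonneg (hF : ∀ i, 0 ≤ F i) (hF1 : ∑ i, F i = 1) (s : Finset ι) :
    0 ≤ ∑ i ∈ s, F i - (∑ i ∈ s, F i) * ∑ i ∈ s, F i := by
  classical
  rw [sum_sub_mul_self_eq_sum_star_mul_mul hF hF1]
  exact sum_nonneg fun i _ => star_left_conjugate_nonneg (hF i) _

lemma norm_sum_inter_sub_mul_sq_le [DecidableEq ι] (hF : ∀ i, 0 ≤ F i) (hF1 : ∑ i, F i = 1)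
    (s t : Finset ι) :
    ‖∑ i ∈ s ∩ t, F i - (∑ i ∈ s, F i) * ∑ i ∈ t, F i‖ ^ 2
      ≤ ‖∑ i ∈ s, F i - (∑ i ∈ s, F i) * ∑ i ∈ s, F i‖
        * ‖∑ i ∈ t, F i - (∑ i ∈ t, F i) * ∑ i ∈ t, F i‖ := by
  rw [sum_sub_mul_sum_eq_sum_star_mul_mul hF hF1, sum_sub_mul_self_eq_sum_star_mul_mul hF hF1,
    sum_sub_mul_self_eq_sum_star_mul_mul hF hF1]
  exact norm_sum_star_mul_mul_sq_le hF _ _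

lemma norm_commutator_sum_le (hF : ∀ i, 0 ≤ F i) (hF1 : ∑ i, F i = 1) (s t : Finset ι) :
    ‖(∑ i ∈ s, F i) * (∑ i ∈ t, F i) - (∑ i ∈ t, F i) * ∑ i ∈ s, F i‖
      ≤ 2 * (√‖∑ i ∈ s, F i - (∑ i ∈ s, F i) * ∑ i ∈ s, F i‖
        * √‖∑ i ∈ t, F i - (∑ i ∈ t, F i) * ∑ i ∈ t, F i‖) := by
  classical
  set G := ∑ i ∈ s, F i
  set K := ∑ i ∈ t, F i
  set J := ∑ i ∈ s ∩ t, F i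
  have hsa (u : Finset ι) : IsSelfAdjoint (∑ i ∈ u, F i) := .of_nonneg (sum_nonneg fun i _ => hF i)
  have hD : ‖J - G * K‖ ≤ √‖G - G * G‖ * √‖K - K * K‖ := by
    rw [← Real.sqrt_mul (norm_nonneg _)]
    exact Real.le_sqrt_of_sq_le (norm_sum_inter_sub_mul_sq_le hF hF1 s t)
  have hGK : G * K - K * G = star (J - G * K) - (J - G * K) := by
    rw [star_sub, star_mul, (hsa s).star_eq, (hsa t).star_eq, (hsa _).star_eq]; abel
  calc ‖G * K - K * G‖ ≤ ‖star (J - G * K)‖ + ‖J - G * K‖ := by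
        rw [hGK]; exact norm_sub_le _ _
    _ ≤ _ := by rw [norm_star]; linarith

theorem IsStarProjection.norm_commutator_le {p q : A} (hp : IsStarProjection p)
    (hq : IsStarProjection q) (hF : ∀ i, 0 ≤ F i) (hF1 : ∑ i, F i = 1) (s t : Finset ι) :
    ‖p * q - q * p‖ ≤ ‖∑ i ∈ s, F i - p‖ + ‖∑ i ∈ t, F i - q‖
      + 2 * (√‖∑ i ∈ s, F i - p‖ * √‖∑ i ∈ t, F i - q‖) := by
  set G := ∑ i ∈ s, F i
  set K := ∑ i ∈ t, F i
  have hsa (u : Finset ι) : IsSelfAdjoint (∑ i ∈ u, F i) := .of_nonneg (sum_nonneg fun i _ => hF i)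
  have hdecomp : p * q - q * p
      = ((p - G) * q - q * (p - G)) - ((q - K) * G - G * (q - K)) + (G * K - K * G) := by
    noncomm_ring
  have hpG : ‖(p - G) * q - q * (p - G)‖ ≤ ‖G - p‖ := by
    calc _ ≤ ‖p - G‖ * ‖(2 : ℝ) • q - 1‖ := norm_commutator_le_mul_norm_two_smul_sub_one _ _
      _ ≤ ‖G - p‖ * 1 := by
        rw [norm_sub_rev]
        gcongr
        exact norm_two_smul_sub_one_le_one hq.isSelfAdjoint
          (by rw [hq.isIdempotentElem.eq, sub_self])
      _ = ‖G - p‖ := mul_one _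
  have hqK : ‖(q - K) * G - G * (q - K)‖ ≤ ‖K - q‖ := by
    calc _ ≤ ‖q - K‖ * ‖(2 : ℝ) • G - 1‖ := norm_commutator_le_mul_norm_two_smul_sub_one _ _
      _ ≤ ‖K - q‖ * 1 := by
        rw [norm_sub_rev]
        gcongr
        exact norm_two_smul_sub_one_le_one (hsa s) (sum_sub_mul_self_nonneg hF hF1 s)
      _ = ‖K - q‖ := mul_one _
  have hGK : ‖G * K - K * G‖ ≤ 2 * (√‖G - p‖ * √‖K - q‖) := by
    refine (norm_commutator_sum_le hF hF1 s t).trans ?_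
    gcongr
    · exact norm_sub_mul_self_le_norm_sub (hsa s) (sum_sub_mul_self_nonneg hF hF1 s) hp
    · exact norm_sub_mul_self_le_norm_sub (hsa t) (sum_sub_mul_self_nonneg hF hF1 t) hq
  rw [hdecomp]
  exact (norm_add_le _ _).trans (add_le_add ((norm_sub_le _ _).trans (add_le_add hpG hqK)) hGK)

end POVM

end CStarAlgebra

theorem tradeoff_pvm_targets_general {H : Type*} [NormedAddCommGroup H]
    [InnerProductSpace ℂ H] [CompleteSpace H]
    {ΩA ΩB Ω : Type*} [Fintype ΩA] [Fintype ΩB] [Fintype Ω]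
    [DecidableEq ΩA] [DecidableEq ΩB]
    (A : ΩA → (H →L[ℂ] H)) (B : ΩB → (H →L[ℂ] H))
    (hAproj : ∀ a, IsSelfAdjoint (A a) ∧ A a * A a = A a)
    (hBproj : ∀ b, IsSelfAdjoint (B b) ∧ B b * B b = B b)
    (F : Ω → (H →L[ℂ] H)) (hFpos : ∀ x, (F x).IsPositive) (hFsum : ∑ x, F x = 1)
    (fA : Ω → ΩA) (fB : Ω → ΩB)
    (α β : ℝ)
    (hα : α = ⨆ a, ‖(∑ x ∈ Finset.univ.filter (fun x => fA x = a), F x) - A a‖)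
    (hβ : β = ⨆ b, ‖(∑ x ∈ Finset.univ.filter (fun x => fB x = b), F x) - B b‖) :
    2 * α * β + α + β + 4 * Real.sqrt α * Real.sqrt β ≥
      ⨆ ab : ΩA × ΩB, ‖A ab.1 * B ab.2 - B ab.2 * A ab.1‖ := by
  have hF (x : Ω) : 0 ≤ F x := (F x).nonneg_iff_isPositive.mpr (hFpos x)
  have hαa (a : ΩA) : ‖(∑ x ∈ univ.filter (fun x => fA x = a), F x) - A a‖ ≤ α :=
    hα ▸ le_ciSup (f := fun a => ‖(∑ x ∈ univ.filter (fun x => fA x = a), F x) - A a‖)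
      (Finite.bddAbove_range _) a
  have hβb (b : ΩB) : ‖(∑ x ∈ univ.filter (fun x => fB x = b), F x) - B b‖ ≤ β :=
    hβ ▸ le_ciSup (f := fun b => ‖(∑ x ∈ univ.filter (fun x => fB x = b), F x) - B b‖)
      (Finite.bddAbove_range _) b
  have hα0 : 0 ≤ α := hα ▸ Real.iSup_nonneg fun _ => norm_nonneg _
  have hβ0 : 0 ≤ β := hβ ▸ Real.iSup_nonneg fun _ => norm_nonneg _
  have hαβ : α + β + 2 * (√α * √β) ≤ 2 * α * β + α + β + 4 * √α * √β := by
    nlinarith [mul_nonneg hα0 hβ0, mul_nonneg (Real.sqrt_nonneg α) (Real.sqrt_nonneg β)]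
  refine Real.iSup_le (fun ⟨a, b⟩ => ?_) (hαβ.trans' (by positivity))
  refine (IsStarProjection.norm_commutator_le ⟨(hAproj a).2, (hAproj a).1⟩
    ⟨(hBproj b).2, (hBproj b).1⟩ hF hFsum (univ.filter fun x => fA x = a)
    (univ.filter fun x => fB x = b)).trans (le_trans ?_ hαβ)
  gcongr
  exacts [hαa a, hβb b, hαa a, hβb b]

theorem tradeoff_pvm_targets {H : Type*} [NormedAddCommGroup H]
    [InnerProductSpace ℂ H] [CompleteSpace H]
    {ΩA ΩB Ω : Type*} [Fintype ΩA] [Fintype ΩB] [Fintype Ω]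
    [Nonempty ΩA] [Nonempty ΩB] [DecidableEq ΩA] [DecidableEq ΩB]
    (A : ΩA → (H →L[ℂ] H)) (B : ΩB → (H →L[ℂ] H))
    (hAproj : ∀ a, IsSelfAdjoint (A a) ∧ A a * A a = A a) (hAsum : ∑ a, A a = 1)
    (hBproj : ∀ b, IsSelfAdjoint (B b) ∧ B b * B b = B b) (hBsum : ∑ b, B b = 1)
    (F : Ω → (H →L[ℂ] H)) (hFpos : ∀ x, (F x).IsPositive) (hFsum : ∑ x, F x = 1)
    (fA : Ω → ΩA) (fB : Ω → ΩB)
    (α β : ℝ)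
    (hα : α = ⨆ a, ‖(∑ x ∈ Finset.univ.filter (fun x => fA x = a), F x) - A a‖)
    (hβ : β = ⨆ b, ‖(∑ x ∈ Finset.univ.filter (fun x => fB x = b), F x) - B b‖) :
    2 * α * β + α + β + 4 * Real.sqrt α * Real.sqrt β ≥
      ⨆ ab : ΩA × ΩB, ‖A ab.1 * B ab.2 - B ab.2 * A ab.1‖ :=
  tradeoff_pvm_targets_general A B hAproj hBproj F hFpos hFsum fA fB α β hα hβ
end
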